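/- arXiv:1109.3527 — 4 statements merged into one kernel-verified Lean document; each statement's English description precedes it below -/
import Mathlib

section
/- There exist absolute constants M_0 ∈ ℕ and C > 0 such that for every integer M ≥ M_0 and every real number N ≥ M², there exists a map κ = (κ_r, κ_θ) : 𝒥 → 𝒥̃ with the following two properties: (a) every element of 𝒥̃ has either exactly two preimages under κ or none; (b) for every (j_1,j_2) ∈ 𝒥, the difference set {k_1 − k_2 : k_1 ∈ D_{j_1}, k_2 ∈ D_{j_2}} is contained in the union of the sets D̃_{j_r,j_θ} over all (j_r,j_θ) ∈ 𝒥̃ satisfying |κ_r(j_1,j_2) − j_r| ≤ C and d[κ_θ(j_1,j_2), j_θ] ≤ C. (Orthogonality lemma, Lemma 3.8.) -/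
noncomputable section

/-- The mod-`M` distance `d[j,j'] = min{|j−j'|, M−|j−j'|}`. -/
def dmod (M : ℕ) (j j' : ℤ) : ℤ := min |j - j'| ((M : ℤ) - |j - j'|)

/-- The annular sector `D_j` of the annulus `N ≤ r ≤ N+10` with angular
aperture `[2π(j−1)/M, 2π(j+1)/M]`. -/
def Dsector (M : ℕ) (N : ℝ) (j : ℤ) : Set (ℝ × ℝ) :=
  {p | ∃ r θ : ℝ, N ≤ r ∧ r ≤ N + 10 ∧
    2 * Real.pi * ((j : ℝ) - 1) / M ≤ θ ∧ θ ≤ 2 * Real.pi * ((j : ℝ) + 1) / M ∧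
    p = (r * Real.cos θ, r * Real.sin θ)}

/-- The target sector `D̃_{j_r, j_θ}`. -/
def Dtarget (M : ℕ) (N : ℝ) (q : ℤ × ℤ) : Set (ℝ × ℝ) :=
  {p | ∃ r θ : ℝ,
    2 * N * Real.sin (Real.pi * ((q.1 : ℝ) - 1) / M) ≤ r ∧
    r ≤ 2 * N * Real.sin (Real.pi * ((q.1 : ℝ) + 1) / M) ∧
    2 * Real.pi * ((q.2 : ℝ) - 1) / M ≤ θ ∧ θ ≤ 2 * Real.pi * ((q.2 : ℝ) + 1) / M ∧
    p = (r * Real.cos θ, r * Real.sin θ)}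

/-- The index set `𝒥` of pairs `(j₁, j₂)` in `{0,…,M−1}²` with
`M/4 − 2 ≤ d[j₁,j₂] ≤ M/2 − 100`. -/
def Jset (M : ℕ) : Set (ℤ × ℤ) :=
  {p | 0 ≤ p.1 ∧ p.1 ≤ (M : ℤ) - 1 ∧ 0 ≤ p.2 ∧ p.2 ≤ (M : ℤ) - 1 ∧
    (M : ℝ) / 4 - 2 ≤ (dmod M p.1 p.2 : ℝ) ∧ (dmod M p.1 p.2 : ℝ) ≤ (M : ℝ) / 2 - 100}

/-- The index set `𝒥̃` of pairs `(j_r, j_θ)` with `1 ≤ j_r ≤ M/2 − 1` and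
`j_θ ∈ {0,…,M−1}`. -/
def Jtset (M : ℕ) : Set (ℤ × ℤ) :=
  {q | 1 ≤ q.1 ∧ (q.1 : ℝ) ≤ (M : ℝ) / 2 - 1 ∧ 0 ≤ q.2 ∧ q.2 ≤ (M : ℤ) - 1}

open Real

/-!
Write `k₁ = r₁ e^{iθ₁}`, `k₂ = r₂ e^{iθ₂}` and let `σ`, `δ` be the half-sum and the half-difference
of the angles. If `d = d[j₁,j₂]` and `s = ±1` is the sign with `j₁ - j₂ ≡ s d (mod M)`, then
`k₁ - k₂ = e^{i(σ + sπ/2)} w` with `Re w = (r₁ + r₂) sin (sδ) ≈ 2N sin (πd/M)` and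
`|Im w| ≤ |r₁ - r₂| ≤ 10`. So `|k₁ - k₂|` is within `30` of `2N sin (πd/M)`, and its direction is
within `O(1/N)` of `σ + sπ/2`, whose angular index is `j₂ + s (d/2 + M/4)` up to `O(1)`.
Because `N ≥ M²` and `d ≤ M/2 - 100`, the radii `2N sin (πk/M)` for `k` near `d` are more than `30`
apart, so the radial index of `k₁ - k₂` is `d` up to `O(1)` as well. Hence
`κ(j₁,j₂) = (d, j₂ + s (⌊d/2⌋ + ⌊M/4⌋) mod M)` works, and a target `(d, t)` has exactly the two
preimages given by `s = 1` and `s = -1`.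
-/

/-! ### Circular distance -/

lemma eq_emod_of_intCast_eq {M : ℕ} {x y : ℤ} (hx₀ : 0 ≤ x) (hxM : x < M)
    (h : (x : ZMod M) = y) : x = y % M := by
  rw [← Int.emod_eq_of_lt hx₀ hxM]
  exact (ZMod.intCast_eq_intCast_iff' x y M).1 h

lemma intCast_sub_eq_dmod_or_neg (M : ℕ) (a b : ℤ) :
    ((a - b : ℤ) : ZMod M) = dmod M a b ∨ ((a - b : ℤ) : ZMod M) = -dmod M a b := by
  have hM : ((M : ℤ) : ZMod M) = 0 := by simp
  unfold dmod
  rcases min_choice |a - b| ((M : ℤ) - |a - b|) with hd | hd <;> rw [hd] <;>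
    rcases abs_choice (a - b) with hu | hu <;> rw [hu] <;> push_cast [hM] <;> simp

lemma dmod_le_abs_sub_sub_mul {M : ℕ} {a b : ℤ} (h : |a - b| ≤ M) (k : ℤ) :
    dmod M a b ≤ |a - b - k * M| := by
  unfold dmod
  have hu := abs_le.1 h
  rcases lt_trichotomy k 0 with hk | rfl | hk
  · have : k * (M : ℤ) ≤ -M := by nlinarith
    refine (min_le_right _ _).trans (le_trans ?_ (le_abs_self _))
    linarith [neg_abs_le (a - b)]
  · simp
  · have : (M : ℤ) ≤ k * M := by nlinarith
    refine (min_le_right _ _).trans (le_trans ?_ (neg_le_abs _))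
    linarith [le_abs_self (a - b)]

lemma dmod_eq_of_intCast_sub_eq {M : ℕ} {a b d s : ℤ} (ha₀ : 0 ≤ a) (haM : a < M)
    (hb₀ : 0 ≤ b) (hbM : b < M) (hd₀ : 0 ≤ d) (hdM : 2 * d ≤ M) (hs : s = 1 ∨ s = -1)
    (h : ((a - b : ℤ) : ZMod M) = s * d) : dmod M a b = d := by
  obtain ⟨k, hk⟩ := (ZMod.intCast_eq_intCast_iff_dvd_sub (a - b) (s * d) M).1 (by exact_mod_cast h)
  have hk₁ : -1 ≤ k ∧ k ≤ 1 := by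
    constructor <;> rcases hs with rfl | rfl <;> nlinarith
  obtain ⟨hk₁, hk₂⟩ := hk₁
  unfold dmod
  rcases abs_cases (a - b) with ⟨hab, hsgn⟩ | ⟨hab, hsgn⟩ <;> rw [hab] <;>
    interval_cases k <;> rcases hs with rfl | rfl <;> omega

lemma int_bounds_of_distance_bounds {M : ℕ} {d : ℤ} (h₁ : (M : ℝ) / 4 - 2 ≤ d)
    (h₂ : (d : ℝ) ≤ M / 2 - 100) : (M : ℤ) ≤ 4 * d + 8 ∧ 2 * d + 200 ≤ M := by
  constructor
  · have : (M : ℝ) ≤ 4 * d + 8 := by linarith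
    exact_mod_cast this
  · have : 2 * (d : ℝ) + 200 ≤ M := by linarith
    exact_mod_cast this

/-! ### The map κ -/

def orient (M : ℕ) (p : ℤ × ℤ) : ℤ :=
  if ((p.1 - p.2 : ℤ) : ZMod M) = dmod M p.1 p.2 then 1 else -1

lemma orient_eq_one_or_neg_one (M : ℕ) (p : ℤ × ℤ) : orient M p = 1 ∨ orient M p = -1 := by
  unfold orient; split_ifs <;> simp

lemma intCast_sub_eq_orient_mul_dmod (M : ℕ) (p : ℤ × ℤ) :
    ((p.1 - p.2 : ℤ) : ZMod M) = orient M p * dmod M p.1 p.2 := by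
  unfold orient
  split_ifs with h
  · simpa using h
  · simpa using (intCast_sub_eq_dmod_or_neg M p.1 p.2).resolve_left h

lemma orient_eq_of_intCast_sub_eq {M : ℕ} {p : ℤ × ℤ} {s : ℤ} (hs : s = 1 ∨ s = -1)
    (hd₀ : 0 < dmod M p.1 p.2) (hdM : 2 * dmod M p.1 p.2 < M)
    (h : ((p.1 - p.2 : ℤ) : ZMod M) = s * dmod M p.1 p.2) : orient M p = s := by
  unfold orient
  rcases hs with rfl | rfl
  · simp [h]
  refine if_neg fun h' => ?_
  have h2d : ((2 * dmod M p.1 p.2 : ℤ) : ZMod M) = 0 := by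
    push_cast; linear_combination h - h'
  have := Int.le_of_dvd (by omega) ((ZMod.intCast_zmod_eq_zero_iff_dvd _ _).1 h2d)
  omega

def kappaShift (M : ℕ) (d : ℤ) : ℤ := d / 2 + M / 4

def kappa (M : ℕ) (p : ℤ × ℤ) : ℤ × ℤ :=
  (dmod M p.1 p.2, (p.2 + orient M p * kappaShift M (dmod M p.1 p.2)) % M)

def kappaPreimage (M : ℕ) (q : ℤ × ℤ) (s : ℤ) : ℤ × ℤ :=
  ((q.2 - s * kappaShift M q.1 + s * q.1) % M, (q.2 - s * kappaShift M q.1) % M)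

lemma abs_kappaShift_sub_le (M : ℕ) (d : ℤ) : |(kappaShift M d : ℝ) - (d / 2 + M / 4)| ≤ 5 / 4 := by
  have h₁ : d - 1 ≤ 2 * (d / 2) ∧ 2 * (d / 2) ≤ d := by omega
  have h₂ : (M : ℤ) - 3 ≤ 4 * ((M : ℤ) / 4) ∧ 4 * ((M : ℤ) / 4) ≤ M := by omega
  have h₁' : (d : ℝ) - 1 ≤ 2 * ((d / 2 : ℤ) : ℝ) ∧ 2 * ((d / 2 : ℤ) : ℝ) ≤ d := by exact_mod_cast h₁
  have h₂' : (M : ℝ) - 3 ≤ 4 * (((M : ℤ) / 4 : ℤ) : ℝ) ∧ 4 * (((M : ℤ) / 4 : ℤ) : ℝ) ≤ M := by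
    exact_mod_cast h₂
  unfold kappaShift
  push_cast
  rw [abs_le]; constructor <;> linarith

lemma kappa_mem_Jtset {M : ℕ} {p : ℤ × ℤ} (hp : p ∈ Jset M) : kappa M p ∈ Jtset M := by
  obtain ⟨-, -, -, -, h₁, h₂⟩ := hp
  have := int_bounds_of_distance_bounds h₁ h₂
  have hM₀ : (0 : ℤ) < M := by omega
  refine ⟨by simp only [kappa]; omega, by simp only [kappa]; linarith,
    Int.emod_nonneg _ hM₀.ne', ?_⟩
  have := Int.emod_lt_of_pos (p.2 + orient M p * kappaShift M (dmod M p.1 p.2)) hM₀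
  simp only [kappa]; omega

section Fiber

variable {M : ℕ} {q : ℤ × ℤ}

lemma eq_kappaPreimage {p : ℤ × ℤ} (hp : p ∈ Jset M) (hpq : kappa M p = q) :
    p = kappaPreimage M q (orient M p) := by
  obtain ⟨h₁, h₂, h₃, h₄, -, -⟩ := hp
  have hd : q.1 = dmod M p.1 p.2 := by rw [← hpq]; rfl
  have hsub := intCast_sub_eq_orient_mul_dmod M p
  push_cast at hsub
  have hsnd : (q.2 : ZMod M) = p.2 + orient M p * kappaShift M q.1 := by
    subst hpq; simp [kappa, ZMod.intCast_mod]
  rw [← hd] at hsub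
  ext
  · exact eq_emod_of_intCast_eq h₁ (by omega) (by push_cast; linear_combination hsub - hsnd)
  · exact eq_emod_of_intCast_eq h₃ (by omega) (by push_cast; linear_combination -hsnd)

lemma kappaPreimage_spec (hq : q ∈ Jtset M) (h₁ : (M : ℝ) / 4 - 2 ≤ q.1)
    (h₂ : (q.1 : ℝ) ≤ M / 2 - 100) {s : ℤ} (hs : s = 1 ∨ s = -1) :
    kappaPreimage M q s ∈ Jset M ∧ kappa M (kappaPreimage M q s) = q := by
  obtain ⟨-, -, hq₃, hq₄⟩ := hq
  have hd := int_bounds_of_distance_bounds h₁ h₂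
  have hM₀ : (0 : ℤ) < M := by omega
  set p := kappaPreimage M q s with hp
  have hp₁ : 0 ≤ p.1 ∧ p.1 < M := ⟨Int.emod_nonneg _ hM₀.ne', Int.emod_lt_of_pos _ hM₀⟩
  have hp₂ : 0 ≤ p.2 ∧ p.2 < M := ⟨Int.emod_nonneg _ hM₀.ne', Int.emod_lt_of_pos _ hM₀⟩
  have hsub : ((p.1 - p.2 : ℤ) : ZMod M) = s * q.1 := by
    simp only [hp, kappaPreimage]; push_cast [ZMod.intCast_mod]; ring
  have hdmod : dmod M p.1 p.2 = q.1 :=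
    dmod_eq_of_intCast_sub_eq hp₁.1 hp₁.2 hp₂.1 hp₂.2 (by omega) (by omega) hs hsub
  have horient : orient M p = s :=
    orient_eq_of_intCast_sub_eq hs (by omega) (by omega) (by rw [hdmod]; exact hsub)
  refine ⟨⟨hp₁.1, by omega, hp₂.1, by omega, by rw [hdmod]; exact h₁, by rw [hdmod]; exact h₂⟩, ?_⟩
  refine Prod.ext hdmod ?_
  rw [show (kappa M p).2 = (p.2 + orient M p * kappaShift M (dmod M p.1 p.2)) % M from rfl,
    horient, hdmod]
  refine (eq_emod_of_intCast_eq hq₃ (by omega) ?_).symm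
  simp only [hp, kappaPreimage]
  push_cast [ZMod.intCast_mod]
  ring

lemma kappaPreimage_one_ne (h₁ : (M : ℝ) / 4 - 2 ≤ q.1)
    (h₂ : (q.1 : ℝ) ≤ M / 2 - 100) : kappaPreimage M q 1 ≠ kappaPreimage M q (-1) := by
  have hd := int_bounds_of_distance_bounds h₁ h₂
  intro h
  have h' := congrArg (fun p : ℤ × ℤ => ((p.2 : ℤ) : ZMod M)) h
  simp only [kappaPreimage, ZMod.intCast_mod] at h'
  have h2c : ((2 * kappaShift M q.1 : ℤ) : ZMod M) = 0 := by
    push_cast at h' ⊢; linear_combination -h'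
  have := Int.le_of_dvd (by unfold kappaShift; omega)
    ((ZMod.intCast_zmod_eq_zero_iff_dvd _ _).1 h2c)
  unfold kappaShift at this
  omega

lemma kappa_fiber_ncard (hq : q ∈ Jtset M) :
    {p | p ∈ Jset M ∧ kappa M p = q}.ncard = 2 ∨ {p | p ∈ Jset M ∧ kappa M p = q} = ∅ := by
  by_cases hd : (M : ℝ) / 4 - 2 ≤ q.1 ∧ (q.1 : ℝ) ≤ M / 2 - 100
  · left
    have hfiber : {p | p ∈ Jset M ∧ kappa M p = q} =
        {kappaPreimage M q 1, kappaPreimage M q (-1)} := by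
      ext p
      constructor
      · rintro ⟨hp, hpq⟩
        rw [eq_kappaPreimage hp hpq]
        rcases orient_eq_one_or_neg_one M p with h | h <;> simp [h]
      · rintro (rfl | rfl)
        exacts [kappaPreimage_spec hq hd.1 hd.2 (Or.inl rfl),
          kappaPreimage_spec hq hd.1 hd.2 (Or.inr rfl)]
    rw [hfiber]
    exact Set.ncard_pair (kappaPreimage_one_ne hd.1 hd.2)
  · right
    refine Set.eq_empty_of_forall_notMem fun p ⟨hp, hpq⟩ => hd ?_
    rw [← hpq]
    exact ⟨hp.2.2.2.2.1, hp.2.2.2.2.2⟩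

end Fiber

/-! ### Trigonometric estimates -/

lemma polar_sub_polar (r₁ r₂ σ δ : ℝ) {s : ℝ} (hs : s = 1 ∨ s = -1) {w : ℂ}
    (hre : w.re = (r₁ + r₂) * sin (s * δ)) (him : w.im = s * ((r₂ - r₁) * cos δ)) :
    ((r₁ * cos (σ + δ), r₁ * sin (σ + δ)) - (r₂ * cos (σ - δ), r₂ * sin (σ - δ)) : ℝ × ℝ) =
      (‖w‖ * cos (σ + s * (π / 2) + w.arg), ‖w‖ * sin (σ + s * (π / 2) + w.arg)) := by
  have hc := Complex.norm_mul_cos_arg w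
  have hs' := Complex.norm_mul_sin_arg w
  set τ := σ + s * (π / 2) with hτ
  have hτ' : cos τ = -s * sin σ ∧ sin τ = s * cos σ := by
    rcases hs with rfl | rfl <;> simp [hτ, ← sub_eq_add_neg, cos_add_pi_div_two, sin_add_pi_div_two,
      cos_sub_pi_div_two, sin_sub_pi_div_two]
  have hs2 : s * s = 1 := by rcases hs with rfl | rfl <;> norm_num
  have hsin : sin (s * δ) = s * sin δ := by rcases hs with rfl | rfl <;> simp
  rw [cos_add τ, sin_add τ, Prod.mk_sub_mk, Prod.mk.injEq, hτ'.1, hτ'.2, cos_add, cos_sub, sin_add,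
    sin_sub]
  rw [hsin] at hre
  constructor
  · linear_combination (s * sin σ) * hc + (s * cos σ) * hs' + (s * sin σ) * hre
      + (s * cos σ) * him - ((r₁ - r₂) * cos σ * cos δ - (r₁ + r₂) * sin σ * sin δ) * hs2
  · linear_combination (-s * cos σ) * hc + (s * sin σ) * hs' - (s * cos σ) * hre
      + (s * sin σ) * him - ((r₁ - r₂) * sin σ * cos δ + (r₁ + r₂) * cos σ * sin δ) * hs2

lemma abs_arg_le_of_re_pos {w : ℂ} (hw : 0 < w.re) : |w.arg| ≤ π / 2 * (|w.im| / w.re) := by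
  have hnorm : 0 < ‖w‖ := hw.trans_le (Complex.re_le_norm w)
  have h := mul_abs_le_abs_sin (Complex.abs_arg_le_pi_div_two_iff.2 hw.le)
  rw [Complex.sin_arg, abs_div, abs_of_pos hnorm] at h
  have h' : |w.im| / ‖w‖ ≤ |w.im| / w.re :=
    div_le_div_of_nonneg_left (abs_nonneg _) hw (Complex.re_le_norm w)
  have hπ := pi_pos
  calc |w.arg| = π / 2 * (2 / π * |w.arg|) := by field_simp
    _ ≤ π / 2 * (|w.im| / w.re) := by gcongr; exact h.trans h'

lemma norm_arg_bounds_of_re_im {N L U x r₁ r₂ : ℝ} {w : ℂ} (hN : 0 < N) (hL : 1 / 2 ≤ L)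
    (hU : U ≤ 1) (hr₁ : N ≤ r₁) (hr₁' : r₁ ≤ N + 10) (hr₂ : N ≤ r₂) (hr₂' : r₂ ≤ N + 10)
    (hxL : L ≤ x) (hxU : x ≤ U) (hre : w.re = (r₁ + r₂) * x) (him : |w.im| ≤ 10) :
    2 * N * L ≤ ‖w‖ ∧ ‖w‖ ≤ 2 * N * U + 30 ∧ |w.arg| ≤ 5 * π / N := by
  have hre₁ : 2 * N * L ≤ w.re := by rw [hre]; nlinarith
  have hre₂ : w.re ≤ 2 * N * U + 20 := by rw [hre]; nlinarith
  have hre₀ : N ≤ w.re := by nlinarith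
  refine ⟨hre₁.trans (Complex.re_le_norm w), ?_, ?_⟩
  · have := Complex.norm_le_abs_re_add_abs_im w
    rw [abs_of_pos (by linarith)] at this
    linarith
  · have hπ := pi_pos
    calc |w.arg| ≤ π / 2 * (|w.im| / w.re) := abs_arg_le_of_re_pos (by linarith)
      _ ≤ π / 2 * (10 / N) := by gcongr
      _ = 5 * π / N := by ring

lemma four_div_pi_sq_mul_le_sin_sub_sin {x y : ℝ} (hx : 0 ≤ x) (hxy : x ≤ y) (hy : y ≤ π / 2) :
    4 / π ^ 2 * (y - x) * (π / 2 - y) ≤ sin y - sin x := by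
  have hπ := pi_pos
  have h₁ : 2 / π * ((y - x) / 2) ≤ sin ((y - x) / 2) := mul_le_sin (by linarith) (by linarith)
  have h₂ : 2 / π * (π / 2 - y) ≤ cos ((y + x) / 2) := by
    rw [← sin_pi_div_two_sub]
    calc 2 / π * (π / 2 - y) ≤ sin (π / 2 - y) := mul_le_sin (by linarith) (by linarith)
      _ ≤ sin (π / 2 - (y + x) / 2) :=
        sin_le_sin_of_le_of_le_pi_div_two (by linarith) (by linarith) (by linarith)
  rw [sin_sub_sin]
  calc 4 / π ^ 2 * (y - x) * (π / 2 - y) = 2 * (2 / π * ((y - x) / 2)) * (2 / π * (π / 2 - y)) := by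
        field_simp; ring
    _ ≤ 2 * sin ((y - x) / 2) * cos ((y + x) / 2) := by
        gcongr
        have : 0 ≤ 2 / π * ((y - x) / 2) := by positivity
        linarith

lemma two_mul_sin_add_thirty_le {M : ℕ} {N d : ℝ} (hN : (M : ℝ) ^ 2 ≤ N)
    (hd₀ : 0 ≤ d) (hd : d ≤ M / 2 - 100) :
    2 * N * sin (π * (d + 2) / M) + 30 ≤ 2 * N * sin (π * (d + 3) / M) := by
  have hπ := pi_pos
  have hMR : (0 : ℝ) < M := by linarith
  have h := four_div_pi_sq_mul_le_sin_sub_sin (x := π * (d + 2) / M) (y := π * (d + 3) / M)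
    (by positivity) (by gcongr; linarith) (by rw [div_le_iff₀ hMR]; nlinarith)
  have e : 4 / π ^ 2 * (π * (d + 3) / M - π * (d + 2) / M) * (π / 2 - π * (d + 3) / M) =
      4 * (M / 2 - d - 3) / M ^ 2 := by
    field_simp; ring
  rw [e] at h
  have h388 : 388 / (M : ℝ) ^ 2 ≤ 4 * (M / 2 - d - 3) / M ^ 2 := by gcongr; linarith
  have hN' : 2 ≤ 2 * N * (1 / (M : ℝ) ^ 2) := by
    rw [mul_one_div, le_div_iff₀ (by positivity)]; linarith
  have : 388 / (M : ℝ) ^ 2 = 388 * (1 / (M : ℝ) ^ 2) := by ring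
  nlinarith

lemma one_half_le_sin_of_distance {M : ℕ} {d : ℝ} (hd₁ : (M : ℝ) / 4 - 2 ≤ d)
    (hd₂ : d ≤ M / 2 - 100) : 1 / 2 ≤ sin (π * (d - 2) / M) := by
  have hπ := pi_pos
  rw [← sin_pi_div_six]
  apply sin_le_sin_of_le_of_le_pi_div_two (by linarith)
  · rw [div_le_iff₀ (by linarith)]; nlinarith
  · rw [le_div_iff₀ (by linarith)]; nlinarith

lemma sin_mem_Icc_of_distance {M : ℕ} {d e : ℝ} (hd₁ : (M : ℝ) / 4 - 2 ≤ d)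
    (hd₂ : d ≤ M / 2 - 100) (he : |e - π * d / M| ≤ 2 * π / M) :
    sin e ∈ Set.Icc (sin (π * (d - 2) / M)) (sin (π * (d + 2) / M)) := by
  have hπ := pi_pos
  have hM : (0 : ℝ) < M := by linarith
  rw [abs_le] at he
  have hlo : π * (d - 2) / M = π * d / M - 2 * π / M := by ring
  have hhi : π * (d + 2) / M = π * d / M + 2 * π / M := by ring
  have hhalf : π * (d + 2) / M ≤ π / 2 := by rw [div_le_iff₀ hM]; nlinarith
  have hlo₀ : 0 ≤ π * (d - 2) / M := div_nonneg (mul_nonneg hπ.le (by linarith)) hM.le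
  exact ⟨sin_le_sin_of_le_of_le_pi_div_two (by linarith) (by linarith) (by linarith),
    sin_le_sin_of_le_of_le_pi_div_two (by linarith) hhalf (by linarith)⟩

lemma Int.exists_apply_le_le_apply_add_one (f : ℤ → ℝ) {a b : ℤ} {x : ℝ} (hab : a < b)
    (ha : f a ≤ x) (hb : x ≤ f b) : ∃ q, a ≤ q ∧ q < b ∧ f q ≤ x ∧ x ≤ f (q + 1) := by
  induction b, hab using Int.leInduction with
  | base => exact ⟨a, le_rfl, by omega, ha, hb⟩
  | succ b hab ih =>
    by_cases hxb : x ≤ f b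
    · obtain ⟨q, h₁, h₂, h₃, h₄⟩ := ih hxb
      exact ⟨q, h₁, by omega, h₃, h₄⟩
    · exact ⟨b, by omega, by omega, (not_le.1 hxb).le, hb⟩

lemma exists_radial_index {M : ℕ} {N R : ℝ} {d : ℤ} (hN : (M : ℝ) ^ 2 ≤ N)
    (hd₀ : 2 ≤ d) (hd : (d : ℝ) ≤ M / 2 - 100)
    (hR₁ : 2 * N * sin (π * ((d : ℝ) - 2) / M) ≤ R)
    (hR₂ : R ≤ 2 * N * sin (π * ((d : ℝ) + 2) / M) + 30) :
    ∃ q₁ : ℤ, |d - q₁| ≤ 3 ∧ 1 ≤ q₁ ∧ (q₁ : ℝ) ≤ M / 2 - 1 ∧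
      2 * N * sin (π * ((q₁ : ℝ) - 1) / M) ≤ R ∧ R ≤ 2 * N * sin (π * ((q₁ : ℝ) + 1) / M) := by
  have hπ := pi_pos
  have hdR : (2 : ℝ) ≤ d := by exact_mod_cast hd₀
  have hMR : (0 : ℝ) < M := by linarith
  set f : ℤ → ℝ := fun k => 2 * N * sin (π * k / M) with hf
  obtain ⟨q, hq₁, hq₂, hfq, hfq₁⟩ :=
    Int.exists_apply_le_le_apply_add_one f (a := d - 2) (b := d + 3) (by omega)
      (by simpa [hf] using hR₁)
      (by simpa [hf] using hR₂.trans (two_mul_sin_add_thirty_le hN (by linarith) hd))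
  have hqR : (q : ℝ) + 2 ≤ d + 4 := by exact_mod_cast (show q + 2 ≤ d + 4 by omega)
  refine ⟨q + 1, by rw [abs_le]; constructor <;> omega, by omega, ?_, ?_, ?_⟩
  · push_cast; linarith
  · simpa [hf] using hfq
  · refine hfq₁.trans ?_
    simp only [hf]
    push_cast
    gcongr 2 * N * ?_
    · linarith [sq_nonneg (M : ℝ)]
    have hq₀ : (0 : ℝ) ≤ q + 1 := by exact_mod_cast (show 0 ≤ q + 1 by omega)
    apply sin_le_sin_of_le_of_le_pi_div_two
    · have : 0 ≤ π * ((q : ℝ) + 1) / M := by positivity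
      linarith
    · rw [div_le_iff₀ hMR]; nlinarith
    · gcongr; linarith

lemma exists_angular_index {M : ℕ} (hM : 0 < M) (Θ : ℝ) :
    ∃ q₂ n : ℤ, 0 ≤ q₂ ∧ q₂ ≤ M - 1 ∧ |Θ * M / (2 * π) - q₂ - n * M| ≤ 1 / 2 ∧
      2 * π * ((q₂ : ℝ) - 1) / M ≤ Θ - n * (2 * π) ∧
      Θ - n * (2 * π) ≤ 2 * π * ((q₂ : ℝ) + 1) / M := by
  set y := Θ * M / (2 * π)
  set m := round y
  have hM' : (0 : ℤ) < M := by exact_mod_cast hM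
  have hMR : (0 : ℝ) < M := by exact_mod_cast hM
  have hround : |y - m| ≤ 1 / 2 := abs_sub_round y
  have hm : ((m % M : ℤ) : ℝ) + (m / M : ℤ) * M = m := by
    have := Int.emod_add_mul_ediv m M
    rw [mul_comm] at this
    exact_mod_cast this
  have hΘ : Θ - (m / M : ℤ) * (2 * π) = 2 * π * (y - (m / M : ℤ) * M) / M := by
    simp only [y]; field_simp
  refine ⟨m % M, m / M, Int.emod_nonneg _ hM'.ne', by linarith [Int.emod_lt_of_pos m hM'], ?_⟩
  rw [hΘ, abs_le]
  rw [abs_le] at hround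
  have hπ : 0 ≤ 2 * π := by positivity
  refine ⟨⟨by linarith, by linarith⟩, ?_, ?_⟩ <;>
    refine div_le_div_of_nonneg_right (mul_le_mul_of_nonneg_left ?_ hπ) hMR.le <;> linarith

/-! ### Differences of points of two sectors -/

lemma exists_of_mem_Dsector {M : ℕ} {N : ℝ} {j : ℤ} {k : ℝ × ℝ} (hk : k ∈ Dsector M N j) :
    ∃ r θ : ℝ, N ≤ r ∧ r ≤ N + 10 ∧ |θ - 2 * π * j / M| ≤ 2 * π / M ∧
      k = (r * cos θ, r * sin θ) := by
  obtain ⟨r, θ, hr₁, hr₂, hθ₁, hθ₂, rfl⟩ := hk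
  refine ⟨r, θ, hr₁, hr₂, abs_le.2 ⟨?_, ?_⟩, rfl⟩
  · have : 2 * π * ((j : ℝ) - 1) / M = 2 * π * j / M - 2 * π / M := by ring
    linarith
  · have : 2 * π * ((j : ℝ) + 1) / M = 2 * π * j / M + 2 * π / M := by ring
    linarith

lemma mem_Dsector_add_mul {M : ℕ} (hM : 0 < M) {N : ℝ} {j : ℤ} {k : ℝ × ℝ}
    (hk : k ∈ Dsector M N j) (m : ℤ) : k ∈ Dsector M N (j + m * M) := by
  obtain ⟨r, θ, hr₁, hr₂, hθ₁, hθ₂, rfl⟩ := hk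
  have hMR : (M : ℝ) ≠ 0 := by positivity
  have e : ∀ c : ℝ,
      2 * π * (((j + m * M : ℤ) : ℝ) + c) / M = 2 * π * ((j : ℝ) + c) / M + m * (2 * π) := by
    intro c; push_cast; field_simp; ring
  refine ⟨r, θ + m * (2 * π), hr₁, hr₂, ?_, ?_, ?_⟩
  · rw [sub_eq_add_neg] at hθ₁ ⊢; rw [e]; linarith
  · rw [e]; linarith
  · rw [cos_add_int_mul_two_pi, sin_add_int_mul_two_pi]

lemma abs_half_angles_sub_le {M : ℕ} {j d s : ℤ} {θ₁ θ₂ : ℝ} (hs : s = 1 ∨ s = -1)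
    (hθ₁ : |θ₁ - 2 * π * ((j + s * d : ℤ) : ℝ) / M| ≤ 2 * π / M)
    (hθ₂ : |θ₂ - 2 * π * j / M| ≤ 2 * π / M) :
    |(θ₁ + θ₂) / 2 - π * (2 * j + s * d) / M| ≤ 2 * π / M ∧
      |s * ((θ₁ - θ₂) / 2) - π * d / M| ≤ 2 * π / M := by
  have hss : (s : ℝ) * s = 1 := by rcases hs with rfl | rfl <;> norm_num
  have habs : |(s : ℝ)| = 1 := by rcases hs with rfl | rfl <;> norm_num
  have e₁ : (θ₁ + θ₂) / 2 - π * (2 * j + s * d) / M =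
      ((θ₁ - 2 * π * ((j + s * d : ℤ) : ℝ) / M) + (θ₂ - 2 * π * j / M)) / 2 := by
    push_cast; ring
  have e₂ : s * ((θ₁ - θ₂) / 2) - π * d / M =
      s * (((θ₁ - 2 * π * ((j + s * d : ℤ) : ℝ) / M) - (θ₂ - 2 * π * j / M)) / 2) := by
    push_cast; linear_combination (π * d / M) * hss
  rw [e₁, e₂, abs_mul, habs, one_mul]
  rw [abs_le] at hθ₁ hθ₂
  constructor <;> rw [abs_le] <;> constructor <;> linarith

lemma sub_eq_polar_of_mem_Dsector {M : ℕ} {N : ℝ} (hN : (M : ℝ) ^ 2 ≤ N) {j d s : ℤ}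
    (hs : s = 1 ∨ s = -1) (hd₁ : (M : ℝ) / 4 - 2 ≤ d) (hd₂ : (d : ℝ) ≤ M / 2 - 100)
    {k₁ k₂ : ℝ × ℝ} (hk₁ : k₁ ∈ Dsector M N (j + s * d)) (hk₂ : k₂ ∈ Dsector M N j) :
    ∃ R Θ : ℝ, k₁ - k₂ = (R * cos Θ, R * sin Θ) ∧
      2 * N * sin (π * ((d : ℝ) - 2) / M) ≤ R ∧ R ≤ 2 * N * sin (π * ((d : ℝ) + 2) / M) + 30 ∧
      |Θ * M / (2 * π) - (j + s * ((d : ℝ) / 2 + M / 4))| ≤ 7 / 6 := by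
  obtain ⟨r₁, θ₁, hr₁, hr₁', hθ₁, rfl⟩ := exists_of_mem_Dsector hk₁
  obtain ⟨r₂, θ₂, hr₂, hr₂', hθ₂, rfl⟩ := exists_of_mem_Dsector hk₂
  have hπ := pi_pos
  have hM : (392 : ℝ) ≤ M := by linarith
  have hN₀ : 0 < N := by nlinarith
  have hs' : (s : ℝ) = 1 ∨ (s : ℝ) = -1 := by rcases hs with rfl | rfl <;> norm_num
  have habs : |(s : ℝ)| = 1 := by rcases hs' with h | h <;> rw [h] <;> norm_num
  set σ := (θ₁ + θ₂) / 2
  set δ := (θ₁ - θ₂) / 2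
  obtain ⟨hσ_bound, hδ_bound⟩ := abs_half_angles_sub_le hs hθ₁ hθ₂
  obtain ⟨hxL, hxU⟩ := sin_mem_Icc_of_distance hd₁ hd₂ hδ_bound
  set w : ℂ := ⟨(r₁ + r₂) * sin (s * δ), s * ((r₂ - r₁) * cos δ)⟩ with hw
  have him : |w.im| ≤ 10 := by
    simp only [hw, abs_mul, habs, one_mul]
    have : |r₂ - r₁| ≤ 10 := by rw [abs_le]; constructor <;> linarith
    nlinarith [abs_cos_le_one δ, abs_nonneg (r₂ - r₁), abs_nonneg (cos δ)]
  obtain ⟨hR₁, hR₂, harg⟩ := norm_arg_bounds_of_re_im hN₀ (one_half_le_sin_of_distance hd₁ hd₂)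
    (sin_le_one _) hr₁ hr₁' hr₂ hr₂' hxL hxU rfl him
  refine ⟨‖w‖, σ + s * (π / 2) + w.arg, ?_, hR₁, hR₂, ?_⟩
  · rw [show θ₁ = σ + δ by ring, show θ₂ = σ - δ by ring]
    exact polar_sub_polar r₁ r₂ σ δ hs' rfl rfl
  have e : (σ + s * (π / 2) + w.arg) * M / (2 * π) - (j + s * ((d : ℝ) / 2 + M / 4)) =
      (σ - π * (2 * j + s * d) / M) * (M / (2 * π)) + w.arg * (M / (2 * π)) := by
    field_simp; ring
  have hMN : (M : ℝ) / N ≤ 1 / 392 := by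
    rw [div_le_div_iff₀ hN₀ (by norm_num)]; nlinarith
  calc _ ≤ |σ - π * (2 * j + s * d) / M| * (M / (2 * π)) + |w.arg| * (M / (2 * π)) := by
        rw [e]
        refine (abs_add_le _ _).trans_eq ?_
        rw [abs_mul, abs_mul, abs_of_pos (by positivity : (0 : ℝ) < M / (2 * π))]
    _ ≤ 2 * π / M * (M / (2 * π)) + 5 * π / N * (M / (2 * π)) := by gcongr
    _ = 1 + 5 / 2 * (M / N) := by field_simp
    _ ≤ 7 / 6 := by linarith only [hMN]

lemma dmod_kappa_snd_le {M : ℕ} (hM : 0 < M) (p : ℤ × ℤ) {q₂ n : ℤ} {y : ℝ} (hq₂ : 0 ≤ q₂)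
    (hq₂' : q₂ ≤ M - 1)
    (hy : |y - (p.2 + orient M p * ((dmod M p.1 p.2 : ℝ) / 2 + M / 4))| ≤ 7 / 6)
    (hyq : |y - q₂ - n * M| ≤ 1 / 2) : dmod M (kappa M p).2 q₂ ≤ 2 := by
  set t := p.2 + orient M p * kappaShift M (dmod M p.1 p.2)
  have hs : |(orient M p : ℝ)| = 1 := by
    rcases orient_eq_one_or_neg_one M p with h | h <;> simp [h]
  have hshift : |(orient M p : ℝ) * kappaShift M (dmod M p.1 p.2) -
      orient M p * ((dmod M p.1 p.2 : ℝ) / 2 + M / 4)| ≤ 5 / 4 := by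
    rw [← mul_sub, abs_mul, hs, one_mul]; exact abs_kappaShift_sub_le M _
  have htR : |((t - q₂ - n * M : ℤ) : ℝ)| < 3 := by
    push_cast [t]
    rw [abs_le] at hshift hy hyq
    rw [abs_lt]; constructor <;> linarith
  have ht : |t - q₂ - n * M| ≤ 2 := by
    have : |t - q₂ - n * M| < 3 := by exact_mod_cast htR
    omega
  have hM' : (0 : ℤ) < M := by omega
  have ha₀ : 0 ≤ (kappa M p).2 := Int.emod_nonneg t hM'.ne'
  have haM : (kappa M p).2 < M := Int.emod_lt_of_pos t hM'
  have h := dmod_le_abs_sub_sub_mul (a := (kappa M p).2) (b := q₂)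
    (abs_le.2 ⟨by linarith, by linarith⟩) (n - t / M)
  rw [show (kappa M p).2 - q₂ - (n - t / M) * M = t - q₂ - n * M by
    rw [show (kappa M p).2 = t - M * (t / M) from Int.emod_def t M]; ring] at h
  exact h.trans ht

lemma exists_mem_Dtarget_near_kappa {M : ℕ} {N : ℝ} (hN : (M : ℝ) ^ 2 ≤ N) {p : ℤ × ℤ}
    (hp : p ∈ Jset M) {k₁ k₂ : ℝ × ℝ} (hk₁ : k₁ ∈ Dsector M N p.1) (hk₂ : k₂ ∈ Dsector M N p.2) :
    ∃ q ∈ Jtset M, (|(kappa M p).1 - q.1| : ℝ) ≤ 3 ∧ (dmod M (kappa M p).2 q.2 : ℝ) ≤ 3 ∧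
      k₁ - k₂ ∈ Dtarget M N q := by
  obtain ⟨-, -, -, -, hd₁, hd₂⟩ := hp
  have hd := int_bounds_of_distance_bounds hd₁ hd₂
  have hM : 0 < M := by omega
  obtain ⟨m, hm⟩ := (ZMod.intCast_eq_intCast_iff_dvd_sub _ _ M).1
    (by exact_mod_cast intCast_sub_eq_orient_mul_dmod M p)
  have hk₁' : k₁ ∈ Dsector M N (p.2 + orient M p * dmod M p.1 p.2) := by
    convert mem_Dsector_add_mul hM hk₁ m using 2
    linarith
  obtain ⟨R, Θ, hk, hR₁, hR₂, hΘ⟩ :=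
    sub_eq_polar_of_mem_Dsector hN (orient_eq_one_or_neg_one M p) hd₁ hd₂ hk₁' hk₂
  obtain ⟨q₁, hq₁d, hq₁, hq₁', hRq₁, hRq₁'⟩ := exists_radial_index hN (by omega) hd₂ hR₁ hR₂
  obtain ⟨q₂, n, hq₂, hq₂', hΘq₂, hθ, hθ'⟩ := exists_angular_index hM Θ
  refine ⟨(q₁, q₂), ⟨hq₁, hq₁', hq₂, hq₂'⟩, by exact_mod_cast hq₁d, ?_,
    R, Θ - n * (2 * π), hRq₁, hRq₁', hθ, hθ', ?_⟩
  · exact_mod_cast (dmod_kappa_snd_le hM p hq₂ hq₂' hΘ hΘq₂).trans (by norm_num)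
  · rw [hk, cos_sub_int_mul_two_pi, sin_sub_int_mul_two_pi]

/-- Lemma 3.8 (orthogonality): a two-to-one correspondence `κ : 𝒥 → 𝒥̃` such
that differences of points from sectors `D_{j₁}`, `D_{j₂}` land in a bounded
neighbourhood (in the index space) of `κ(j₁,j₂)`. -/
theorem orthogonality_lemma :
    ∃ M₀ : ℕ, ∃ C : ℝ, 0 < C ∧
      ∀ M : ℕ, M₀ ≤ M → ∀ N : ℝ, (M : ℝ) ^ 2 ≤ N →
        ∃ κ : ℤ × ℤ → ℤ × ℤ,
          (∀ p ∈ Jset M, κ p ∈ Jtset M) ∧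
          (∀ q ∈ Jtset M,
            {p | p ∈ Jset M ∧ κ p = q}.ncard = 2 ∨ {p | p ∈ Jset M ∧ κ p = q} = ∅) ∧
          (∀ p ∈ Jset M, ∀ k₁ ∈ Dsector M N p.1, ∀ k₂ ∈ Dsector M N p.2,
            ∃ q ∈ Jtset M, (|(κ p).1 - q.1| : ℝ) ≤ C ∧
              (dmod M (κ p).2 q.2 : ℝ) ≤ C ∧ k₁ - k₂ ∈ Dtarget M N q) :=
  -- `M₀ = 0`: the inequalities defining `𝒥` already force `M ≥ 392`.
  ⟨0, 3, by norm_num, fun M _ N hN => ⟨kappa M, fun _ hp => kappa_mem_Jtset hp,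
    fun _ hq => kappa_fiber_ncard hq,
    fun _ hp _ hk₁ _ hk₂ => exists_mem_Dtarget_near_kappa hN hp hk₁ hk₂⟩⟩
end
end

section
/- Let d ≥ 2 be an integer and γ = (γ_1,…,γ_d) with every γ_j > 0. There exist constants 0 < c ≤ C and an integer N_0 ≥ 2, depending only on d and γ, such that for every integer N ≥ N_0 there exists n ∈ ℤ for which the lattice points K := (N/γ_1, (n−1)/γ_2, 0,…,0) and K̃ := ((1−N)/γ_1, n/γ_2, 0,…,0) of Z_γ^d satisfy: (a) −γ_2^{-2} < |K−K̃| + |K|² − |K̃|² ≤ γ_2^{-2}; (b) cN ≤ | −|K−K̃| + |K|² − |K̃|² | ≤ CN; (c) cN ≤ |K| ≤ CN, cN ≤ |K̃| ≤ CN, and cN ≤ |K−K̃| ≤ CN. (Construction of a resonant frequency pair for arbitrary periods in dimension d ≥ 2, used in Sections 1 and 5.) -/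
/-!
Write `a = γ₁⁻¹`, `b = γ₂⁻¹`. The difference `K - K̃ = ((2N - 1) a, -b)` does not depend
on `n`, while `|K|² - |K̃|² = (2N - 1) a² - (2n - 1) b²` moves in steps of `2b²` as `n`
varies, so exactly one `n` puts `|K - K̃| + |K|² - |K̃|²` into the window `(-b², b²]`.
That `n` satisfies `n b² ≈ (a + a²) N`, so every vector involved has length of order `N`,
and `-|K - K̃| + |K|² - |K̃|²` is the window value minus `2|K - K̃| ≥ 2(2N - 1) a`, which is
of order `-N` as soon as `b² ≤ N a`.
-/

open Set

theorem EuclideanSpace.norm_sq_eq_of_apply_eq_zero {ι : Type*} [Fintype ι]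
    (v : EuclideanSpace ℝ ι) {i j : ι} (hij : i ≠ j)
    (hv : ∀ k, k ≠ i ∧ k ≠ j → v k = 0) :
    ‖v‖ ^ 2 = v i ^ 2 + v j ^ 2 := by
  rw [EuclideanSpace.real_norm_sq_eq, Fintype.sum_eq_add i j hij]
  intro k hk
  simp [hv k hk]

theorem le_and_le_add_of_sq_eq_sq_add_sq {k x y : ℝ} (hx : 0 ≤ x) (hy : 0 ≤ y) (hk0 : 0 ≤ k)
    (hk : k ^ 2 = x ^ 2 + y ^ 2) : x ≤ k ∧ k ≤ x + y :=
  ⟨(sq_le_sq₀ hx hk0).1 (by nlinarith), (sq_le_sq₀ hk0 (add_nonneg hx hy)).1 (by nlinarith)⟩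

theorem exists_int_sub_two_mul_mem_Ioc (x : ℝ) {p : ℝ} (hp : 0 < p) :
    ∃ n : ℤ, x - 2 * n * p ∈ Ioc (-p) p := by
  obtain ⟨n, hn, -⟩ := existsUnique_sub_zsmul_mem_Ioc (by positivity : 0 < 2 * p) x (-p)
  rw [zsmul_eq_mul, show -p + 2 * p = p by ring] at hn
  exact ⟨n, by convert hn using 2; ring⟩

noncomputable def planarPoint {d : ℕ} (γ : Fin d → ℝ) (x y : ℝ) :
    EuclideanSpace ℝ (Fin d) :=
  WithLp.toLp 2 fun j => if (j : ℕ) = 0 then x / γ j else if (j : ℕ) = 1 then y / γ j else 0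

theorem planarPoint_sub {d : ℕ} (γ : Fin d → ℝ) (x y x' y' : ℝ) :
    planarPoint γ x y - planarPoint γ x' y' = planarPoint γ (x - x') (y - y') := by
  ext j
  simp only [planarPoint, PiLp.sub_apply]
  split_ifs <;> ring

theorem norm_planarPoint_sq {d : ℕ} (hd : 2 ≤ d) (γ : Fin d → ℝ) (x y : ℝ) :
    ‖planarPoint γ x y‖ ^ 2 =
      (x * (γ ⟨0, by omega⟩)⁻¹) ^ 2 + (y * (γ ⟨1, hd⟩)⁻¹) ^ 2 := by
  rw [EuclideanSpace.norm_sq_eq_of_apply_eq_zero _ (i := ⟨0, by omega⟩) (j := ⟨1, hd⟩)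
    (by simp [Fin.ext_iff])]
  · simp [planarPoint, div_eq_mul_inv]
  · rintro k ⟨hk0, hk1⟩
    simp [planarPoint, Fin.ext_iff] at hk0 hk1 ⊢
    simp [hk0, hk1]

def LinearlyBounded (c C N x : ℝ) : Prop := c * N ≤ x ∧ x ≤ C * N

noncomputable def resonantIndexSlope (a b : ℝ) : ℝ :=
  (2 * a + b + 2 * a ^ 2 + 2 * b ^ 2) / (2 * b)

/-- Dominates `a + resonantIndexSlope a b`, `2a + b` and `4a + 2b + b²`, the slopes of the upper
bounds for `|K|, |K̃|`, for `|K - K̃|` and for `|-|K - K̃| + |K|² - |K̃|²|`. -/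
noncomputable def resonanceConst (a b : ℝ) : ℝ :=
  4 * a + 2 * b + b ^ 2 + resonantIndexSlope a b

theorem resonantIndexSlope_nonneg {a b : ℝ} (ha : 0 < a) (hb : 0 < b) :
    0 ≤ resonantIndexSlope a b := by
  unfold resonantIndexSlope
  positivity

theorem half_le_resonanceConst {a b : ℝ} (ha : 0 < a) (hb : 0 < b) :
    a / 2 ≤ resonanceConst a b := by
  have := resonantIndexSlope_nonneg ha hb
  unfold resonanceConst
  nlinarith

section Resonance

variable {a b N r : ℝ} {n : ℤ}

theorem resonant_index_bounds (ha : 0 < a) (hb : 0 < b) (hN : 1 ≤ N) (hr0 : 0 ≤ r)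
    (hr : r ≤ (2 * N - 1) * a + b)
    (hS : r + (2 * N - 1) * a ^ 2 - (2 * n - 1) * b ^ 2 ∈ Ioc (-b ^ 2) (b ^ 2)) :
    1 ≤ (n : ℝ) ∧ n * b ≤ resonantIndexSlope a b * N := by
  obtain ⟨hS_lo, hS_hi⟩ := hS
  constructor
  · have hn : (0 : ℝ) < n := by
      have : 0 < (2 * N - 1) * a ^ 2 := by nlinarith
      nlinarith
    exact_mod_cast Int.cast_pos.mp hn
  · rw [resonantIndexSlope, div_mul_eq_mul_div, le_div_iff₀ (by positivity)]
    nlinarith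

theorem linearlyBounded_of_resonant (ha : 0 < a) (hb : 0 < b) (hN : 2 ≤ N)
    (hNa : b ^ 2 ≤ N * a) {k kt : ℝ} (hr0 : 0 ≤ r) (hk0 : 0 ≤ k) (hkt0 : 0 ≤ kt)
    (hr : r ^ 2 = ((2 * N - 1) * a) ^ 2 + b ^ 2)
    (hk : k ^ 2 = (N * a) ^ 2 + ((n - 1) * b) ^ 2)
    (hkt : kt ^ 2 = ((1 - N) * a) ^ 2 + (n * b) ^ 2)
    (hres : r + k ^ 2 - kt ^ 2 ∈ Ioc (-b ^ 2) (b ^ 2)) :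
    LinearlyBounded (a / 2) (resonanceConst a b) N |-r + k ^ 2 - kt ^ 2| ∧
      LinearlyBounded (a / 2) (resonanceConst a b) N k ∧
      LinearlyBounded (a / 2) (resonanceConst a b) N kt ∧
      LinearlyBounded (a / 2) (resonanceConst a b) N r := by
  have hsq : k ^ 2 - kt ^ 2 = (2 * N - 1) * a ^ 2 - (2 * n - 1) * b ^ 2 := by
    rw [hk, hkt]; ring
  have hS : r + (2 * N - 1) * a ^ 2 - (2 * n - 1) * b ^ 2 ∈ Ioc (-b ^ 2) (b ^ 2) := by
    rwa [add_sub_assoc, ← hsq, ← add_sub_assoc]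
  obtain ⟨hr_lo, hr_hi⟩ :=
    le_and_le_add_of_sq_eq_sq_add_sq (mul_nonneg (by linarith) ha.le) hb.le hr0 hr
  obtain ⟨hn1, hnb⟩ := resonant_index_bounds ha hb (by linarith) hr0 hr_hi hS
  obtain ⟨hk_lo, hk_hi⟩ := le_and_le_add_of_sq_eq_sq_add_sq (mul_nonneg (by linarith) ha.le)
    (mul_nonneg (by linarith) hb.le) hk0 hk
  have hkt' : kt ^ 2 = ((N - 1) * a) ^ 2 + (n * b) ^ 2 := by rw [hkt]; ring
  obtain ⟨hkt_lo, hkt_hi⟩ := le_and_le_add_of_sq_eq_sq_add_sq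
    (mul_nonneg (by linarith) ha.le) (mul_nonneg (by linarith) hb.le) hkt0 hkt'
  obtain ⟨hS_lo, hS_hi⟩ := hS
  have h2a : 2 * a ≤ N * a := mul_le_mul_of_nonneg_right hN ha.le
  have hbN : b ≤ b * N := le_mul_of_one_le_right hb.le (by linarith)
  have hb2N : b ^ 2 ≤ b ^ 2 * N := le_mul_of_one_le_right (sq_nonneg b) (by linarith)
  have hβN : 0 ≤ resonantIndexSlope a b * N :=
    mul_nonneg (resonantIndexSlope_nonneg ha hb) (by linarith)
  have hD : -r + k ^ 2 - kt ^ 2 = r + (2 * N - 1) * a ^ 2 - (2 * n - 1) * b ^ 2 - 2 * r := by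
    linarith
  rw [hD, abs_of_neg (by linarith)]
  unfold LinearlyBounded resonanceConst
  refine ⟨⟨?_, ?_⟩, ⟨?_, ?_⟩, ⟨?_, ?_⟩, ⟨?_, ?_⟩⟩ <;> linarith

end Resonance

/-- Construction of a resonant frequency pair `K, K̃ ∈ Z_γ^d` for arbitrary
periods in dimension `d ≥ 2` (Sections 1 and 5). -/
theorem resonant_pair_exists
    (d : ℕ) (hd : 2 ≤ d) (γ : Fin d → ℝ) (hγ : ∀ j, 0 < γ j) :
    ∃ c C : ℝ, ∃ N₀ : ℕ, 0 < c ∧ c ≤ C ∧ 2 ≤ N₀ ∧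
      ∀ N : ℕ, N₀ ≤ N →
        ∃ n : ℤ, ∃ K Kt : EuclideanSpace ℝ (Fin d),
          K = (fun j : Fin d => if (j : ℕ) = 0 then (N : ℝ) / γ j
                else if (j : ℕ) = 1 then ((n : ℝ) - 1) / γ j else 0) ∧
          Kt = (fun j : Fin d => if (j : ℕ) = 0 then (1 - (N : ℝ)) / γ j
                else if (j : ℕ) = 1 then (n : ℝ) / γ j else 0) ∧
          (-(γ ⟨1, by omega⟩)⁻¹ ^ 2 < ‖K - Kt‖ + ‖K‖ ^ 2 - ‖Kt‖ ^ 2 ∧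
            ‖K - Kt‖ + ‖K‖ ^ 2 - ‖Kt‖ ^ 2 ≤ (γ ⟨1, by omega⟩)⁻¹ ^ 2) ∧
          (c * N ≤ |-‖K - Kt‖ + ‖K‖ ^ 2 - ‖Kt‖ ^ 2| ∧
            |-‖K - Kt‖ + ‖K‖ ^ 2 - ‖Kt‖ ^ 2| ≤ C * N) ∧
          (c * N ≤ ‖K‖ ∧ ‖K‖ ≤ C * N) ∧
          (c * N ≤ ‖Kt‖ ∧ ‖Kt‖ ≤ C * N) ∧
          (c * N ≤ ‖K - Kt‖ ∧ ‖K - Kt‖ ≤ C * N) := by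
  set a := (γ ⟨0, by omega⟩)⁻¹
  set b := (γ ⟨1, hd⟩)⁻¹
  have ha : 0 < a := inv_pos.2 (hγ _)
  have hb : 0 < b := inv_pos.2 (hγ _)
  refine ⟨a / 2, resonanceConst a b, max 2 ⌈b ^ 2 / a⌉₊, by positivity,
    half_le_resonanceConst ha hb, le_max_left _ _, fun N hN => ?_⟩
  have hN2 : (2 : ℝ) ≤ N := by exact_mod_cast (le_max_left _ _).trans hN
  have hNa : b ^ 2 ≤ N * a := (div_le_iff₀ ha).1 (Nat.ceil_le.1 ((le_max_right _ _).trans hN))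
  set r := ‖planarPoint γ (2 * N - 1) (-1)‖
  obtain ⟨n, hS⟩ :=
    exists_int_sub_two_mul_mem_Ioc (r + (2 * N - 1) * a ^ 2 + b ^ 2) (pow_pos hb 2)
  refine ⟨n, planarPoint γ N (n - 1), planarPoint γ (1 - N) n, rfl, rfl, ?_⟩
  have hK := norm_planarPoint_sq hd γ N (n - 1)
  have hKt := norm_planarPoint_sq hd γ (1 - N) n
  have hr : r ^ 2 = ((2 * N - 1) * a) ^ 2 + b ^ 2 := by rw [norm_planarPoint_sq hd]; ring
  have hdiff : planarPoint γ N (n - 1) - planarPoint γ (1 - N) n =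
      planarPoint γ (2 * N - 1) (-1) := by
    rw [planarPoint_sub]; congr 1 <;> ring
  have hres : r + ‖planarPoint γ N (n - 1)‖ ^ 2 - ‖planarPoint γ (1 - N) n‖ ^ 2 ∈
      Ioc (-b ^ 2) (b ^ 2) := by
    rw [hK, hKt]; convert hS using 1; ring
  rw [hdiff]
  exact ⟨hres, linearlyBounded_of_resonant ha hb hN2 hNa (norm_nonneg _) (norm_nonneg _)
    (norm_nonneg _) hr hK hKt hres⟩
end

section
/- Let γ_2 > 0. There exist constants t_0 > 0 and c > 0, depending only on γ_2, with the following property: for all real numbers A, B and every real t with 0 < |t| ≤ t_0, if |A| ≤ γ_2^{-2} and |B| ≥ 100/|t|, then |∫_0^t e^{i t′ A} dt′| − |∫_0^t e^{i t′ B} dt′| ≥ c·|t|. (This is the lower bound on the second Picard iterate at a resonant frequency: combined with the resonant pair K, K̃, where A = |K−K̃| + |K|² − |K̃|² and B = −|K−K̃| + |K|² − |K̃|², it is the core estimate in the proof that the data-to-solution map is not C², Lemma 6.2 (i)–(ii).) -/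
open intervalIntegral

noncomputable section

/-! For `|t| ≤ γ₂² / 2` the phase `t' A` has modulus at most `1/2` on `[0, t]`, so `e^{i t' A}` stays
within `|t| |A|` of `1` and the `A`-integral has modulus at least `|t| / 2`. The `B`-integral is
`(e^{i t B} - 1) / (i B)`, of modulus at most `2 / |B| ≤ |t| / 50`. -/

section

open Complex

theorem norm_integral_exp_I_mul_le {B : ℝ} (hB : B ≠ 0) (t : ℝ) :
    ‖∫ s in (0:ℝ)..t, exp (I * s * B)‖ ≤ 2 / |B| := by
  have hIB : I * (B : ℂ) ≠ 0 := mul_ne_zero I_ne_zero (ofReal_ne_zero.mpr hB)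
  have hprim : ∫ s in (0:ℝ)..t, exp (I * s * B) = (exp (I * B * t) - 1) / (I * B) := by
    simp_rw [mul_right_comm I]
    simp [integral_exp_mul_complex hIB]
  have hnum : ‖exp (I * B * t) - 1‖ ≤ 2 := by
    calc ‖exp (I * B * t) - 1‖ ≤ ‖exp (I * B * t)‖ + ‖(1 : ℂ)‖ := norm_sub_le _ _
      _ = 2 := by norm_num [norm_exp]
  rw [hprim, norm_div, norm_mul, norm_I, one_mul, norm_real, Real.norm_eq_abs]
  gcongr

theorem mul_one_sub_le_norm_integral_exp_I_mul (A t : ℝ) :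
    |t| * (1 - |t| * |A|) ≤ ‖∫ s in (0:ℝ)..t, exp (I * s * A)‖ := by
  have hsplit : ∫ s in (0:ℝ)..t, exp (I * s * A) =
      t + ∫ s in (0:ℝ)..t, (exp (I * s * A) - 1) := by
    rw [integral_sub ((by fun_prop : Continuous _).intervalIntegrable _ _) intervalIntegrable_const]
    simp
  have herr : ‖∫ s in (0:ℝ)..t, (exp (I * s * A) - 1)‖ ≤ |t| * |A| * |t| := by
    refine (norm_integral_le_of_norm_le_const fun s hs => ?_).trans_eq (by rw [sub_zero])
    have hst : |s| ≤ |t| := by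
      simpa using Set.abs_sub_left_of_mem_uIcc (Set.uIoc_subset_uIcc hs)
    calc ‖exp (I * s * A) - 1‖ = ‖exp (I * ↑(s * A)) - 1‖ := by push_cast; ring_nf
      _ ≤ ‖s * A‖ := Real.norm_exp_I_mul_ofReal_sub_one_le
      _ ≤ |t| * |A| := by rw [Real.norm_eq_abs, abs_mul]; gcongr
  rw [hsplit]
  calc |t| * (1 - |t| * |A|) ≤ ‖(t : ℂ)‖ - ‖∫ s in (0:ℝ)..t, (exp (I * s * A) - 1)‖ := by
        rw [norm_real, Real.norm_eq_abs]; linarith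
    _ ≤ _ := norm_sub_le_norm_add _ _

end

/-- Lower bound on the second Picard iterate at a resonant frequency
(core estimate in the proof of Lemma 6.2 (i)–(ii)). -/
theorem picard_iterate_lower_bound (γ₂ : ℝ) (hγ₂ : 0 < γ₂) :
    ∃ t₀ c : ℝ, 0 < t₀ ∧ 0 < c ∧
      ∀ A B t : ℝ, t ≠ 0 → |t| ≤ t₀ →
        |A| ≤ (γ₂ ^ 2)⁻¹ → 100 / |t| ≤ |B| →
        c * |t| ≤
          ‖∫ t' in (0:ℝ)..t, Complex.exp (Complex.I * (t' : ℂ) * (A : ℂ))‖ -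
            ‖∫ t' in (0:ℝ)..t, Complex.exp (Complex.I * (t' : ℂ) * (B : ℂ))‖ := by
  refine ⟨γ₂ ^ 2 / 2, 1 / 4, by positivity, by norm_num, fun A B t ht ht₀ hA hB => ?_⟩
  have htpos : 0 < |t| := abs_pos.mpr ht
  have hBpos : 0 < |B| := (by positivity : (0 : ℝ) < 100 / |t|).trans_le hB
  have htA : |t| * |A| ≤ 1 / 2 :=
    calc |t| * |A| ≤ γ₂ ^ 2 / 2 * (γ₂ ^ 2)⁻¹ := by gcongr
      _ = 1 / 2 := by field_simp
  have hBt : 2 / |B| ≤ |t| / 50 := by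
    rw [div_le_div_iff₀ hBpos (by norm_num)]
    rw [div_le_iff₀ htpos] at hB
    linarith
  calc 1 / 4 * |t| ≤ |t| * (1 - |t| * |A|) - 2 / |B| := by nlinarith
    _ ≤ _ := sub_le_sub (mul_one_sub_le_norm_integral_exp_I_mul A t)
        (norm_integral_exp_I_mul_le (abs_pos.mp hBpos) t)
end
end

section
/- There exists a constant c > 0 such that for every real a ≥ 2, setting t := π/(2a), one has |∫_0^t a · sin((t−t′)a) · e^{−i t′ a²} dt′| ≥ c/a. (This oscillatory-integral lower bound is the core computation in the proof of Lemma 6.2 (iv), showing that the quadratic Duhamel term of the wave part cannot be bounded in H^l by ‖u_0‖_{H^s}² when l > s+1.) -/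
/-!
The integrand has an explicit primitive, so the integral is
`(a² e^{-ibt} - a² cos(ta) + i a b sin(ta)) / (a² - b²)`. For `b = a²` and the quarter period
`t = π / (2a)` this is `(e^{-ita²} + i a) / (1 - a²)`, whose modulus is at least
`(a - 1) / (a² - 1) = 1 / (a + 1) ≥ 2 / (3a)` once `a ≥ 2`.
-/

open intervalIntegral Complex

noncomputable section

theorem hasDerivAt_duhamel_primitive (a t x : ℝ) (b : ℂ) (hab : (a : ℂ) ^ 2 ≠ b ^ 2) :
    HasDerivAt
      (fun x : ℝ => cexp (-I * x * b) *
        (a ^ 2 * Real.cos ((t - x) * a) - I * a * b * Real.sin ((t - x) * a)) / (a ^ 2 - b ^ 2))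
      ((a * Real.sin ((t - x) * a) : ℝ) * cexp (-I * x * b)) x := by
  have hphase : HasDerivAt (fun x : ℝ => (t - x) * a) (-a) x := by
    simpa using ((hasDerivAt_id x).const_sub t).mul_const a
  have hexp : HasDerivAt (fun x : ℝ => cexp (-I * x * b)) (cexp (-I * x * b) * (-I * b)) x := by
    simpa using (((hasDerivAt_id x).ofReal_comp.const_mul (-I)).mul_const b).cexp
  have hcos := hphase.cos.ofReal_comp
  have hsin := hphase.sin.ofReal_comp
  refine ((hexp.mul ((hcos.const_mul ((a : ℂ) ^ 2)).sub (hsin.const_mul (I * a * b)))).div_const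
    ((a : ℂ) ^ 2 - b ^ 2)).congr_deriv ?_
  rw [Pi.sub_apply, div_eq_iff (sub_ne_zero.mpr hab)]
  push_cast
  linear_combination (a * b ^ 2 * Complex.sin ((t - x) * a) * cexp (-I * x * b)) * I_sq

theorem integral_mul_sin_mul_cexp (a t : ℝ) (b : ℂ) (hab : (a : ℂ) ^ 2 ≠ b ^ 2) :
    ∫ x in (0 : ℝ)..t, ((a * Real.sin ((t - x) * a) : ℝ) : ℂ) * cexp (-I * x * b) =
      (a ^ 2 * cexp (-I * t * b) - a ^ 2 * Real.cos (t * a) + I * a * b * Real.sin (t * a)) /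
        (a ^ 2 - b ^ 2) := by
  rw [integral_eq_sub_of_hasDerivAt (fun x _ => hasDerivAt_duhamel_primitive a t x b hab)
    (by apply Continuous.intervalIntegrable; fun_prop)]
  simp only [sub_self, zero_mul, Real.cos_zero, Real.sin_zero, sub_zero, ofReal_zero, ofReal_one,
    mul_zero, mul_one, exp_zero, one_mul]
  ring

theorem integral_mul_sin_mul_cexp_sq_quarter_period (a : ℝ) (ha : a ≠ 0)
    (ha' : (1 : ℂ) - (a : ℂ) ^ 2 ≠ 0) :
    ∫ x in (0 : ℝ)..Real.pi / (2 * a),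
        ((a * Real.sin ((Real.pi / (2 * a) - x) * a) : ℝ) : ℂ) * cexp (-I * x * (a : ℂ) ^ 2) =
      (cexp (-I * (Real.pi / (2 * a) : ℝ) * (a : ℂ) ^ 2) + I * a) / (1 - a ^ 2) := by
  have ha0 : (a : ℂ) ≠ 0 := ofReal_ne_zero.mpr ha
  have hab : (a : ℂ) ^ 2 ≠ ((a : ℂ) ^ 2) ^ 2 := by
    rw [← sub_ne_zero, show (a : ℂ) ^ 2 - ((a : ℂ) ^ 2) ^ 2 = a ^ 2 * (1 - a ^ 2) by ring]
    exact mul_ne_zero (pow_ne_zero 2 ha0) ha'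
  have hquarter : Real.pi / (2 * a) * a = Real.pi / 2 := by field_simp
  rw [integral_mul_sin_mul_cexp _ _ _ hab, hquarter, Real.cos_pi_div_two, Real.sin_pi_div_two]
  field_simp
  push_cast
  ring

theorem norm_sub_one_le_norm_cexp_add {z : ℂ} (hz : z.re = 0) (w : ℂ) :
    ‖w‖ - 1 ≤ ‖cexp z + w‖ := by
  simpa [norm_exp, hz, add_comm] using norm_sub_norm_le w (-cexp z)

/-- Oscillatory-integral lower bound for the quadratic Duhamel term of the
wave part (core computation in the proof of Lemma 6.2 (iv)). -/
theorem wave_duhamel_lower_bound :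
    ∃ c : ℝ, 0 < c ∧
      ∀ a : ℝ, 2 ≤ a →
        c / a ≤
          ‖∫ t' in (0:ℝ)..(Real.pi / (2 * a)),
            ((a * Real.sin ((Real.pi / (2 * a) - t') * a) : ℝ) : ℂ) *
              Complex.exp (-Complex.I * (t' : ℂ) * (a : ℂ) ^ 2)‖ := by
  refine ⟨2 / 3, by norm_num, fun a ha => ?_⟩
  have hnorm_den : ‖(1 : ℂ) - (a : ℂ) ^ 2‖ = a ^ 2 - 1 := by
    rw [← ofReal_pow, ← ofReal_one, ← ofReal_sub, norm_real, Real.norm_of_nonpos (by nlinarith),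
      neg_sub]
  have hden : (1 : ℂ) - (a : ℂ) ^ 2 ≠ 0 := by
    rw [← norm_ne_zero_iff, hnorm_den]; nlinarith
  have hnum : a - 1 ≤ ‖cexp (-I * (Real.pi / (2 * a) : ℝ) * (a : ℂ) ^ 2) + I * a‖ := by
    have := norm_sub_one_le_norm_cexp_add
      (by simp [← ofReal_pow, -ofReal_div] : (-I * (Real.pi / (2 * a) : ℝ) * (a : ℂ) ^ 2).re = 0) (I * a)
    rwa [norm_mul, norm_I, norm_real, Real.norm_of_nonneg (by linarith), one_mul] at this
  rw [integral_mul_sin_mul_cexp_sq_quarter_period a (by linarith) hden, norm_div, hnorm_den]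
  calc 2 / 3 / a ≤ (a - 1) / (a ^ 2 - 1) := by
        rw [div_le_div_iff₀ (by linarith) (by nlinarith)]; nlinarith
    _ ≤ _ := by gcongr; nlinarith
end
end
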